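/- arXiv:2210.07281 — 7 statements merged into one kernel-verified Lean document; each statement's English description precedes it below -/
import Mathlib

section
/- For every k with 1 ≤ k ≤ l, one has m^{(k)} = g^k m^{(l−k)} in (ℤ/2ℤ)^f. -/
open Polynomial

/-- The tuple `μ ∈ (ℤ ± x)^f`:  `μ₀ = x - 1`, `μ₁ = p - 2 - x`, and
`μ_j = p - 1 - x` for `2 ≤ j ≤ f - 1`.  Indices are taken in `ZMod f`. -/
noncomputable def muTuple (p f : ℕ) : ZMod f → Polynomial ℤ := fun j =>
  if j = 0 then X - 1
  else if j = 1 then C ((p : ℤ) - 2) - X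
  else C ((p : ℤ) - 1) - X

/-- `muIter p f k = μ^{(k)} = g^{k-1}μ ∘ ⋯ ∘ gμ ∘ μ`, with `μ^{(0)} = (x, …, x)`;
composition and the cyclic shift `g` (`(gλ)_j = λ_{j+1}`) are componentwise. -/
noncomputable def muIter (p f : ℕ) : ℕ → ZMod f → Polynomial ℤ
  | 0 => fun _ => X
  | k + 1 => fun j => (muTuple p f (j + (k : ZMod f))).comp (muIter p f k j)

/-- `msign p f k = m^{(k)} ∈ (ℤ/2)^f`: the `j`-th entry is `0` iff the leading
coefficient of `μ^{(k)}_j` is `+1`. -/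
noncomputable def msign (p f k : ℕ) (j : ZMod f) : ZMod 2 :=
  if (muIter p f k j).coeff 1 = 1 then 0 else 1

/-- `l = f` if `f` is odd and `l = 2f` if `f` is even. -/
def cycLen (f : ℕ) : ℕ := if Odd f then f else 2 * f

def S (f k : ℕ) (j : ZMod f) : ZMod 2 :=
  (Finset.range k).sum (fun i => if (j + (i : ZMod f)) = 0 then (0 : ZMod 2) else 1)

lemma key (p f : ℕ) : ∀ (k : ℕ) (j : ZMod f),
    ((muIter p f k j).coeff 1 = 1 ∧ S f k j = 0)
  ∨ ((muIter p f k j).coeff 1 = -1 ∧ S f k j = 1) := by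
  intro k
  induction k with
  | zero => intro j; left; simp [muIter, S]
  | succ k ih =>
    intro j
    have hS : S f (k+1) j = S f k j + (if (j + (k : ZMod f)) = 0 then (0:ZMod 2) else 1) :=
      Finset.sum_range_succ _ _
    have hc : (muIter p f (k+1) j).coeff 1
        = (if (j + (k : ZMod f)) = 0 then (1:ℤ) else -1) * (muIter p f k j).coeff 1 := by
      show ((muTuple p f (j + (k : ZMod f))).comp (muIter p f k j)).coeff 1 = _
      unfold muTuple
      by_cases h0 : (j + (k : ZMod f)) = 0
      · simp [h0, coeff_one]
      · by_cases h1 : (j + (k : ZMod f)) = 1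
        · simp [h0, h1, h1 ▸ h0, coeff_one]
        · simp [h0, h1, coeff_one]
    rcases ih j with ⟨h1, h2⟩ | ⟨h1, h2⟩ <;> by_cases h0 : (j + (k : ZMod f)) = 0 <;>
      simp [hS, hc, h0, h1, h2]
    all_goals decide

lemma msign_eq_S (p f k : ℕ) (j : ZMod f) : msign p f k j = S f k j := by
  rcases key p f k j with ⟨h1, h2⟩ | ⟨h1, h2⟩
  · simp [msign, h1, h2]
  · rw [msign, if_neg (by rw [h1]; norm_num), h2]

lemma S_add (f k m : ℕ) (j : ZMod f) : S f (k + m) j = S f k j + S f m (j + (k : ZMod f)) := by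
  rw [S, Finset.sum_range_add]
  congr 1
  apply Finset.sum_congr rfl
  intro i _
  congr 1
  push_cast
  ring_nf

lemma S_f (f : ℕ) (hf : 1 < f) (j : ZMod f) : S f f j = (f : ZMod 2) + 1 := by
  haveI : NeZero f := ⟨by omega⟩
  have : ∀ i ∈ Finset.range f, (if (j + (i : ZMod f)) = 0 then (0:ZMod 2) else 1)
      = 1 + (if i = (-j).val then (1:ZMod 2) else 0) := by
    intro i hi
    have hlt := Finset.mem_range.mp hi
    by_cases h : (j + (i : ZMod f)) = 0
    · have h2 : (i : ZMod f) = -j := by linear_combination h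
      have h3 : i = (-j).val := by rw [← h2, ZMod.val_cast_of_lt hlt]
      rw [if_pos h, if_pos h3]
      decide
    · have h3 : i ≠ (-j).val := by
        intro he
        apply h
        rw [he, ZMod.natCast_val, ZMod.cast_id]
        ring
      simp [h, h3]
  rw [S, Finset.sum_congr rfl this, Finset.sum_add_distrib, Finset.sum_const,
    Finset.card_range, Finset.sum_ite_eq' (Finset.range f) ((-j).val)]
  simp [Finset.mem_range.mpr ((-j).val_lt)]

lemma S_cycLen (f : ℕ) (hf : 1 < f) (j : ZMod f) : S f (cycLen f) j = 0 := by
  rw [cycLen]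
  by_cases h : Odd f
  · rw [if_pos h, S_f f hf]
    have : (f : ZMod 2) = 1 := by
      obtain ⟨m, hm⟩ := h
      subst hm; push_cast; ring_nf
      have h2 : (2 : ZMod 2) = 0 := rfl
      rw [h2, mul_zero, add_zero]
    rw [this]; decide
  · rw [if_neg h, two_mul, S_add, S_f f hf, S_f f hf]
    ring_nf
    have h2 : (2 : ZMod 2) = 0 := rfl
    rw [h2, mul_zero]
    decide

/-- Lemma 2.1(1): `m^{(k)} = g^k m^{(l-k)}`. -/
theorem msign_eq_shift_msign_sub (p f : ℕ) (hp : p.Prime) (hp3 : 3 < p) (hf : 1 < f)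
    (k : ℕ) (hk1 : 1 ≤ k) (hk2 : k ≤ cycLen f) (j : ZMod f) :
    msign p f k j = msign p f (cycLen f - k) (j + (k : ZMod f)) := by
  rw [msign_eq_S, msign_eq_S]
  have h : k + (cycLen f - k) = cycLen f := by omega
  have hs := S_add f k (cycLen f - k) j
  rw [h, S_cycLen f hf] at hs
  have hz : ∀ a b : ZMod 2, (0:ZMod 2) = a + b → a = b := by decide
  exact hz _ _ hs
end

section
/- Let k₁, k₂ be integers with 1 ≤ k₁, k₂ ≤ l − 1 and k₁ ≠ k₂. Then there exists an integer i ≥ 0 with m^{(k₁)} = g^i m^{(k₂)} (i.e., m^{(k₁)} and m^{(k₂)} are cyclic permutations of each other) if and only if k₂ = l − k₁. -/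
/-!
The `j`-th entry of `μ^{(k)}` has leading coefficient `(-1)^r`, where `r` counts the factors
`g^t μ`, `t < k`, acting on it by a reflection `c - x`, i.e. those with `j + t ≠ 0`. Hence
`m^{(k)}_j ≡ r (mod 2)` and `m^{(a+b)} = m^{(a)} + g^a m^{(b)}`. Every residue is hit exactly once
in `f` consecutive steps, so `m^{(l)} = 0`, which gives `m^{(k)} = g^k m^{(l-k)}`.

Conversely, the number of ones of `m^{(k)}` is invariant under cyclic shifts. It equals `k` or
`f - k` for `k ≤ f` and `2f - k` or `k - f` for `f < k ≤ 2f`, according to the parity of `k`,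
and on `1 ≤ k ≤ l - 1` this determines `k` up to `k ↦ l - k`.
-/

open Polynomial

open Finset

def reflCount (f k : ℕ) (j : ZMod f) : ℕ := #{t ∈ range k | j + (t : ℕ) ≠ 0}

lemma reflCount_add (f a b : ℕ) (j : ZMod f) :
    reflCount f (a + b) j = reflCount f a j + reflCount f b (j + a) := by
  simp only [reflCount, card_filter, sum_range_add, Nat.cast_add, add_assoc]

lemma coeff_one_muTuple_comp (p f : ℕ) (i : ZMod f) (q : ℤ[X]) :
    ((muTuple p f i).comp q).coeff 1 = if i = 0 then q.coeff 1 else -q.coeff 1 := by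
  unfold muTuple
  split_ifs <;> simp [sub_comp, coeff_one]

lemma coeff_one_muIter (p f k : ℕ) (j : ZMod f) :
    (muIter p f k j).coeff 1 = (-1) ^ reflCount f k j := by
  induction k with
  | zero => simp [muIter, reflCount]
  | succ k ih =>
    rw [muIter, coeff_one_muTuple_comp, ih, reflCount_add]
    by_cases h : j + k = 0 <;> simp [reflCount, h, filter_singleton, pow_succ]

lemma msign_eq_reflCount (p f k : ℕ) (j : ZMod f) : msign p f k j = reflCount f k j := by
  rw [msign, coeff_one_muIter]
  rcases Nat.even_or_odd (reflCount f k j) with h | h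
  · rw [h.neg_one_pow, if_pos rfl, ZMod.natCast_eq_zero_iff_even.mpr h]
  · rw [h.neg_one_pow, if_neg (by decide), ZMod.natCast_eq_one_iff_odd.mpr h]

lemma msign_add (p f a b : ℕ) (j : ZMod f) :
    msign p f (a + b) j = msign p f a j + msign p f b (j + a) := by
  simp only [msign_eq_reflCount, reflCount_add, Nat.cast_add]

lemma cycLen_le (f : ℕ) : cycLen f ≤ 2 * f := by
  unfold cycLen
  split_ifs <;> omega

section NeZero

variable {f : ℕ} [NeZero f]

lemma add_natCast_eq_zero_iff {t : ℕ} (ht : t < f) (j : ZMod f) : j + t = 0 ↔ t = (-j).val := by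
  rw [add_eq_zero_iff_eq_neg', ← (ZMod.val_injective f).eq_iff, ZMod.val_cast_of_lt ht]

lemma reflCount_of_le {k : ℕ} (hk : k ≤ f) (j : ZMod f) :
    reflCount f k j = k - if (-j).val < k then 1 else 0 := by
  have hzero : #{t ∈ range k | j + (t : ℕ) = 0} = if (-j).val < k then 1 else 0 := by
    rw [filter_congr fun t ht ↦ add_natCast_eq_zero_iff ((mem_range.mp ht).trans_le hk) j,
      range_filter_eq]
    split_ifs <;> rfl
  have hsplit := card_filter_add_card_filter_not (s := range k) fun t ↦ j + (t : ℕ) = 0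
  rw [card_range, hzero] at hsplit
  simp only [reflCount, ne_eq]
  omega

lemma msign_self (p : ℕ) (j : ZMod f) : msign p f f j = (f - 1 : ℕ) := by
  rw [msign_eq_reflCount, reflCount_of_le le_rfl, if_pos (ZMod.val_lt _)]

lemma msign_self_add (p k : ℕ) (j : ZMod f) :
    msign p f (f + k) j = msign p f k j + (f - 1 : ℕ) := by
  rw [msign_add, msign_self, ZMod.natCast_self, add_zero, add_comm]

lemma msign_cycLen (p : ℕ) (j : ZMod f) : msign p f (cycLen f) j = 0 := by
  unfold cycLen
  split_ifs with hf
  · rw [msign_self, ZMod.natCast_eq_zero_iff_even]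
    exact Nat.Odd.sub_odd hf odd_one
  · rw [two_mul, msign_self_add, msign_self, CharTwo.add_self_eq_zero]

lemma msign_cycLen_sub (p : ℕ) {k : ℕ} (hk : k ≤ cycLen f) (j : ZMod f) :
    msign p f k j = msign p f (cycLen f - k) (j + k) := by
  have h := msign_cycLen p j
  rw [← Nat.add_sub_cancel' hk, msign_add] at h
  rw [eq_neg_of_add_eq_zero_left h, ZMod.neg_eq_self_mod_two]

noncomputable def signWeight (p f k : ℕ) [NeZero f] : ℕ := #{j : ZMod f | msign p f k j = 1}

lemma signWeight_eq_of_shift {p k₁ k₂ : ℕ} {i : ZMod f}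
    (h : ∀ j, msign p f k₁ j = msign p f k₂ (j + i)) : signWeight p f k₁ = signWeight p f k₂ :=
  card_equiv (Equiv.addRight i) fun j ↦ by simp [h]

lemma card_filter_neg_val_lt {k : ℕ} (hk : k ≤ f) : #{j : ZMod f | (-j).val < k} = k := by
  rw [card_equiv (Equiv.neg _) (t := {j : ZMod f | j.val < k}) (by simp)]
  -- `ZMod (n + 1)` is `Fin (n + 1)` by definition
  obtain ⟨n, rfl⟩ : ∃ n, f = n + 1 := Nat.exists_eq_succ_of_ne_zero (NeZero.ne f)
  exact Fin.card_filter_val_lt.trans (min_eq_right hk)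

lemma signWeight_of_le (p : ℕ) {k : ℕ} (hk : k ≤ f) :
    signWeight p f k = if Even k then k else f - k := by
  have hone (j : ZMod f) : msign p f k j = 1 ↔ (Even k ↔ (-j).val < k) := by
    rw [msign_eq_reflCount, ZMod.natCast_eq_one_iff_odd, reflCount_of_le hk]
    split_ifs with h <;> simp only [Nat.odd_iff, Nat.even_iff] <;> omega
  rw [signWeight, filter_congr fun j _ ↦ hone j]
  split_ifs with he
  · simpa [he] using card_filter_neg_val_lt hk
  · have hsplit := card_filter_add_card_filter_not (s := univ) fun j : ZMod f ↦ (-j).val < k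
    simp only [card_univ, ZMod.card, card_filter_neg_val_lt hk] at hsplit
    simp only [he, false_iff]
    omega

lemma signWeight_self_add (p k : ℕ) :
    signWeight p f (f + k) = if Even f then f - signWeight p f k else signWeight p f k := by
  simp only [signWeight, msign_self_add]
  split_ifs with hf
  · have hodd : ((f - 1 : ℕ) : ZMod 2) = 1 :=
      ZMod.natCast_eq_one_iff_odd.mpr ((Nat.odd_sub NeZero.one_le).mpr (by simp [hf]))
    have hflip : ∀ a : ZMod 2, a + 1 = 1 ↔ ¬a = 1 := by decide
    have hsplit := card_filter_add_card_filter_not (s := univ) fun j : ZMod f ↦ msign p f k j = 1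
    simp only [card_univ, ZMod.card, hodd, hflip] at hsplit ⊢
    omega
  · have heven : Even (f - 1) := (Nat.even_sub NeZero.one_le).mpr (by simp [hf])
    simp only [ZMod.natCast_eq_zero_iff_even.mpr heven, add_zero]

lemma signWeight_eq (p : ℕ) {k : ℕ} (hk : k ≤ 2 * f) :
    signWeight p f k =
      if k ≤ f then (if Even k then k else f - k) else (if Even k then 2 * f - k else k - f) := by
  by_cases hkf : k ≤ f
  · rw [if_pos hkf, signWeight_of_le p hkf]
  · obtain ⟨i, rfl⟩ := Nat.exists_eq_add_of_le (le_of_not_ge hkf)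
    rw [if_neg hkf, signWeight_self_add, signWeight_of_le p (by omega)]
    simp only [Nat.even_iff]
    split_ifs <;> omega

end NeZero

theorem msign_cyclic_perm_iff_general (p f : ℕ) (hf : 1 < f)
    (k₁ k₂ : ℕ) (hk₁' : k₁ ≤ cycLen f - 1)
    (hk₂' : k₂ ≤ cycLen f - 1) (hne : k₁ ≠ k₂) :
    (∃ i : ℕ, ∀ j : ZMod f, msign p f k₁ j = msign p f k₂ (j + (i : ZMod f))) ↔
      k₂ = cycLen f - k₁ := by
  have : NeZero f := ⟨by omega⟩
  have hl := cycLen_le f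
  constructor
  · rintro ⟨i, hi⟩
    have hw := signWeight_eq_of_shift hi
    rw [signWeight_eq p (by omega), signWeight_eq p (by omega)] at hw
    unfold cycLen at *
    simp only [Nat.even_iff, Nat.odd_iff] at hw hk₁' hk₂' ⊢
    split_ifs at hw hk₁' hk₂' ⊢ <;> omega
  · rintro rfl
    exact ⟨k₁, msign_cycLen_sub p (by omega)⟩

/-- Lemma 2.1(2): for `1 ≤ k₁, k₂ ≤ l - 1` with `k₁ ≠ k₂`, the tuples `m^{(k₁)}` and
`m^{(k₂)}` are cyclic permutations of each other iff `k₂ = l - k₁`. -/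
theorem msign_cyclic_perm_iff (p f : ℕ) (hp : p.Prime) (hp3 : 3 < p) (hf : 1 < f)
    (k₁ k₂ : ℕ) (hk₁ : 1 ≤ k₁) (hk₁' : k₁ ≤ cycLen f - 1)
    (hk₂ : 1 ≤ k₂) (hk₂' : k₂ ≤ cycLen f - 1) (hne : k₁ ≠ k₂) :
    (∃ i : ℕ, ∀ j : ZMod f, msign p f k₁ j = msign p f k₂ (j + (i : ZMod f))) ↔
      k₂ = cycLen f - k₁ :=
  msign_cyclic_perm_iff_general p f hf k₁ k₂ hk₁' hk₂' hne
end

section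
/- Let k be an integer with 1 ≤ k ≤ l − 1, and assume moreover that k ≠ l/2 when f is even. Then m^{(k)} is not equal to any of its non-trivial cyclic permutations, i.e., g^i m^{(k)} ≠ m^{(k)} for every i with 1 ≤ i ≤ f − 1. -/
open Polynomial

/-- The linear coefficient of `μ^{(k)}_j` is the product of the signs of the
leading coefficients of the factors `μ_{j+t}`, `t = 0, …, k-1`. -/
lemma muIter_coeff_one (p f : ℕ) (k : ℕ) (j : ZMod f) :
    (muIter p f k j).coeff 1 =
      ∏ t ∈ Finset.range k, (if j + (t : ZMod f) = 0 then (1:ℤ) else -1) := by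
  induction k with
  | zero => simp [muIter]
  | succ k ih =>
    rw [Finset.prod_range_succ, ← ih]
    show ((muTuple p f (j + (k : ZMod f))).comp (muIter p f k j)).coeff 1 = _
    unfold muTuple
    split_ifs with h0 h1
    · rw [sub_comp, X_comp, one_comp, coeff_sub, coeff_one]
      simp
    · rw [sub_comp, C_comp, X_comp, coeff_sub, coeff_C]
      simp
    · rw [sub_comp, C_comp, X_comp, coeff_sub, coeff_C]
      simp

/-- Counting the indices `t < k` with `j + t ≡ 0 (mod f)`, when `k ≤ 2f`. -/
lemma count_lemma (f : ℕ) (hf : 2 ≤ f) (k : ℕ) (hk : k ≤ 2*f) (j : ZMod f) :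
    ((Finset.range k).filter (fun t : ℕ => j + (t : ZMod f) = 0)).card
      = (if (-j).val < k then 1 else 0) + (if (-j).val + f < k then 1 else 0) := by
  haveI : NeZero f := ⟨by omega⟩
  set v := (-j).val with hv
  have hvf : v < f := ZMod.val_lt _
  have hmem : ∀ t, t < k → (j + (t : ZMod f) = 0 ↔ (t = v ∨ t = v + f)) := by
    intro t ht
    have hcast : ((v : ℕ) : ZMod f) = -j := by
      rw [hv, ZMod.natCast_val, ZMod.cast_id]
    have h1 : (j + (t : ZMod f) = 0) ↔ (t : ZMod f) = ((v : ℕ) : ZMod f) := by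
      rw [hcast, add_comm, add_eq_zero_iff_eq_neg]
    rw [h1, ZMod.natCast_eq_natCast_iff]
    unfold Nat.ModEq
    rw [Nat.mod_eq_of_lt hvf]
    have hdm := Nat.div_add_mod t f
    have hlt2 : t / f < 2 := Nat.div_lt_of_lt_mul (by omega)
    have hq : t / f = 0 ∨ t / f = 1 :=
      Nat.le_one_iff_eq_zero_or_eq_one.mp (Nat.lt_succ_iff.mp hlt2)
    have hmf : t % f < f := Nat.mod_lt _ (by omega)
    rcases hq with h | h <;> rw [h] at hdm <;> omega
  have hfe : (Finset.range k).filter (fun t : ℕ => j + (t : ZMod f) = 0)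
      = (Finset.range k).filter (fun t : ℕ => t = v ∨ t = v + f) := by
    apply Finset.filter_congr
    intro t ht
    simpa using hmem t (Finset.mem_range.mp ht)
  rw [hfe, Finset.filter_or, Finset.filter_eq', Finset.filter_eq']
  simp only [Finset.mem_range]
  split_ifs with h1 h2 h2
  · have he : ({v} : Finset ℕ) ∪ {v + f} = insert v {v + f} := by ext x; simp
    rw [he, Finset.card_insert_of_notMem (by simp; omega)]
    simp
  · simp
  · omega
  · simp

/-- The sign criterion: the linear coefficient of `μ^{(k)}_j` is `+1` iff the parity of `k`
matches the parity of the number of zero indices in the factorization. -/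
lemma coeff_one_iff (p f k : ℕ) (hf : 2 ≤ f) (hk : k ≤ 2*f) (j : ZMod f) :
    ((muIter p f k j).coeff 1 = 1) ↔
      (k % 2 = 0 ↔ ¬((-j).val < k ∧ ¬((-j).val + f < k))) := by
  have hfac : ∀ t ∈ Finset.range k, (if j + (t:ZMod f) = 0 then (1:ℤ) else -1)
      = (-1) * (if j + (t:ZMod f) = 0 then -1 else 1) := by
    intro t _; split_ifs <;> ring
  rw [muIter_coeff_one, Finset.prod_congr rfl hfac, Finset.prod_mul_distrib,
    Finset.prod_const, Finset.prod_ite, Finset.prod_const, Finset.prod_const_one, mul_one,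
    Finset.card_range, ← pow_add, neg_one_pow_eq_one_iff_even (by norm_num : (-1:ℤ) ≠ 1),
    Nat.even_iff]
  have hcnt := count_lemma f hf k hk j
  split_ifs at hcnt with h1 h2 h2 <;> omega

/-- In `ZMod f` (`f ≥ 2`), the value of `x - 1`. -/
lemma val_sub_one (f : ℕ) (hf : 2 ≤ f) (x : ZMod f) :
    (x - 1).val = if x = 0 then f - 1 else x.val - 1 := by
  haveI : NeZero f := ⟨by omega⟩
  by_cases h0 : x = 0
  · rw [if_pos h0, h0, zero_sub]
    have h1 : ((f - 1 : ℕ) : ZMod f) = -1 := by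
      rw [Nat.cast_sub (by omega), ZMod.natCast_self, Nat.cast_one, zero_sub]
    rw [← h1, ZMod.val_cast_of_lt (by omega)]
  · rw [if_neg h0]
    have hv1 : 1 ≤ x.val := by
      have := (ZMod.val_eq_zero x).not.mpr h0
      omega
    have hvf : x.val < f := ZMod.val_lt x
    have hc : ((x.val : ℕ) : ZMod f) = x := by rw [ZMod.natCast_val, ZMod.cast_id]
    have he : x - 1 = (((x.val - 1 : ℕ)) : ZMod f) := by
      rw [Nat.cast_sub hv1, hc, Nat.cast_one]
    rw [he, ZMod.val_cast_of_lt (by omega)]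

/-- Lemma 2.1(3): for `1 ≤ k ≤ l - 1` (and `k ≠ l/2` if `f` is even), `m^{(k)}` differs
from all of its non-trivial cyclic permutations. -/
theorem msign_ne_nontrivial_cyclic_perm (p f : ℕ) (hp : p.Prime) (hp3 : 3 < p) (hf : 1 < f)
    (k : ℕ) (hk1 : 1 ≤ k) (hk2 : k ≤ cycLen f - 1)
    (hhalf : Even f → k ≠ cycLen f / 2) :
    ∀ i : ℕ, 1 ≤ i → i ≤ f - 1 →
      (fun j : ZMod f => msign p f k (j + (i : ZMod f))) ≠ msign p f k := by
  intro i hi1 hi2 hEq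
  haveI : NeZero f := ⟨by omega⟩
  have hkc : k ≠ f ∧ k ≤ 2 * f - 1 := by
    by_cases hodd : Odd f
    · have hcy : cycLen f = f := if_pos hodd
      rw [hcy] at hk2
      omega
    · have heven : Even f := Nat.not_odd_iff_even.mp hodd
      have hcy : cycLen f = 2 * f := if_neg hodd
      have h2 := hhalf heven
      rw [hcy] at hk2 h2
      omega
  obtain ⟨hkf, hk2f⟩ := hkc
  -- the parity predicate is invariant under the shift by `i`
  have hAshift : ∀ j : ZMod f,
      (((-(j + (i:ZMod f))).val < k ∧ ¬((-(j + (i:ZMod f))).val + f < k)) ↔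
        ((-j).val < k ∧ ¬((-j).val + f < k))) := by
    intro j
    have hmsign : msign p f k (j + (i : ZMod f)) = msign p f k j := congrFun hEq j
    unfold msign at hmsign
    have hco : (muIter p f k (j + (i:ZMod f))).coeff 1 = 1 ↔ (muIter p f k j).coeff 1 = 1 := by
      constructor
      · intro h1; by_contra h2
        rw [if_pos h1, if_neg h2] at hmsign; exact absurd hmsign (by decide)
      · intro h2; by_contra h1
        rw [if_neg h1, if_pos h2] at hmsign; exact absurd hmsign (by decide)
    have k1 := coeff_one_iff p f k (by omega) (by omega) (j + (i:ZMod f))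
    have k2 := coeff_one_iff p f k (by omega) (by omega) j
    rw [k1, k2] at hco
    rcases Nat.mod_two_eq_zero_or_one k with hpar | hpar <;> rw [hpar] at hco
    · have e0 : ∀ A : Prop, ((0 = 0 ↔ ¬A) ↔ ¬A) := fun A =>
        ⟨fun h => h.mp rfl, fun h => iff_of_true rfl h⟩
      rw [e0, e0] at hco
      exact not_iff_not.mp hco
    · have e1 : ∀ A : Prop, ((1 = 0 ↔ ¬A) ↔ A) := fun A => by
        constructor
        · intro h
          by_contra hA
          exact one_ne_zero (h.mpr hA)
        · intro hA
          exact ⟨fun h => absurd h one_ne_zero, fun hnA => absurd hA hnA⟩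
      rw [e1, e1] at hco
      exact hco
  -- the reference endpoint value `r0`
  obtain ⟨r0, hr0f, hr0a, hr0b⟩ : ∃ r0, r0 < f ∧ (k < f → r0 = 0) ∧ (f < k → r0 = k - f) := by
    refine ⟨if k < f then 0 else k - f, ?_, ?_, ?_⟩ <;> split_ifs <;> omega
  set e : ZMod f := -((r0 : ℕ) : ZMod f) with he
  have hve : (-e).val = r0 := by rw [he, neg_neg, ZMod.val_cast_of_lt hr0f]
  have hvsucc : ∀ x : ZMod f, (-(x + 1)).val = if (-x) = 0 then f - 1 else (-x).val - 1 := by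
    intro x
    have hx : -(x + 1) = (-x) - 1 := by ring
    rw [hx, val_sub_one f (by omega)]
  -- existence of the endpoint at `e`
  have hAe : ((-e).val < k ∧ ¬((-e).val + f < k)) := by
    rw [hve]; omega
  have hnAe1 : ¬((-(e + 1)).val < k ∧ ¬((-(e + 1)).val + f < k)) := by
    rw [hvsucc e]
    by_cases hez : -e = 0
    · rw [if_pos hez]
      have h0 : r0 = 0 := by rw [← hve]; exact (ZMod.val_eq_zero _).mpr hez
      omega
    · rw [if_neg hez]
      have h0 : r0 ≠ 0 := by
        rw [← hve]
        exact fun h => hez ((ZMod.val_eq_zero _).mp h)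
      rw [hve]
      omega
  -- uniqueness of the endpoint
  have hG : ∀ x : ZMod f, ((-x).val < k ∧ ¬((-x).val + f < k)) →
      ¬((-(x + 1)).val < k ∧ ¬((-(x + 1)).val + f < k)) → (-x).val = r0 := by
    intro x hx hx1
    rw [hvsucc x] at hx1
    have hvx : (-x).val < f := ZMod.val_lt _
    by_cases hxz : -x = 0
    · rw [if_pos hxz] at hx1
      have h0 : (-x).val = 0 := (ZMod.val_eq_zero _).mpr hxz
      omega
    · rw [if_neg hxz] at hx1
      have h0 : (-x).val ≠ 0 := fun h => hxz ((ZMod.val_eq_zero _).mp h)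
      omega
  -- transporting the endpoint along the shift
  have hAei := (hAshift e).mpr hAe
  have hnAei1 : ¬((-(e + (i:ZMod f) + 1)).val < k ∧ ¬((-(e + (i:ZMod f) + 1)).val + f < k)) := by
    have hcomm : e + 1 + (i:ZMod f) = e + (i:ZMod f) + 1 := by ring
    have h := hAshift (e + 1)
    rw [hcomm] at h
    exact fun hcon => hnAe1 (h.mp hcon)
  have hval : (-(e + (i:ZMod f))).val = r0 := hG (e + (i:ZMod f)) hAei hnAei1
  have heq : -(e + (i:ZMod f)) = -e := ZMod.val_injective f (by rw [hval, hve])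
  have heq2 : e + (i:ZMod f) = e := neg_injective heq
  have hi0 : ((i:ℕ) : ZMod f) = 0 := by
    have h := heq2
    rwa [add_eq_left] at h
  have hdvd : f ∣ i := (ZMod.natCast_eq_zero_iff i f).mp hi0
  have := Nat.le_of_dvd (by omega) hdvd
  omega
end

section
/- For 1 ≤ k ≤ l, let N(k) denote the number of indices j ∈ {0, …, f − 1} with m^{(k)}_j = 0. If f is odd (so l = f), then N(k) = k for k odd and N(k) = l − k for k even. If f is even (so l = 2f), then for k odd one has N(k) = k if k ≤ l/2 and N(k) = l − k if k > l/2, while for k even one has N(k) = l/2 − k if k ≤ l/2 and N(k) = k − l/2 if k > l/2. -/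
open Polynomial

/-- `N(k)`: the number of indices `j` with `m^{(k)}_j = 0`. -/
noncomputable def numZeros (p f k : ℕ) : ℕ :=
  Nat.card {j : ZMod f // msign p f k j = 0}

/-! Every `μ_j` is linear, so the leading coefficient of `μ^{(k)}_j` is `∏_{i<k} ε(j+i)` with
`ε(0) = 1` and `ε(i) = -1` otherwise. For `k ≤ f` this product is `(-1)^k`,
flipped once more exactly when the unique `i` with `j + i = 0`, namely `(-j) mod f`, is `< k`.
Hence `N(k) = k` for odd `k` and `N(k) = f - k` for even `k`. A full turn around the cycle
contributes `∏_{i<f} ε(i) = -(-1)^f`, so for even `f` every sign flips between `k` and `f + k`,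
and `N(f + r) = f - N(r)`. -/

open Finset

theorem Polynomial.coeff_one_comp_of_natDegree_le_one {R : Type*} [CommSemiring R] {P : R[X]}
    (hP : P.natDegree ≤ 1) (q : R[X]) : (P.comp q).coeff 1 = P.coeff 1 * q.coeff 1 := by
  rw [eq_X_add_C_of_natDegree_le_one hP]
  simp

lemma ZMod.natCard_subtype_not {n : ℕ} [NeZero n] (P : ZMod n → Prop) :
    Nat.card {x : ZMod n // ¬ P x} = n - Nat.card {x : ZMod n // P x} := by
  classical
  simp only [Nat.card_eq_fintype_card, Fintype.card_subtype_compl, ZMod.card]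

lemma ZMod.natCard_neg_val_lt {n k : ℕ} [NeZero n] (hk : k ≤ n) :
    Nat.card {x : ZMod n // (-x).val < k} = k := by
  let e : {x : ZMod n // (-x).val < k} ≃ Fin k :=
    { toFun := fun x => ⟨(-x.1).val, x.2⟩
      invFun := fun i => ⟨-(i : ZMod n), by simp [ZMod.val_cast_of_lt (i.2.trans_le hk)]⟩
      left_inv := fun x => Subtype.ext (by simp)
      right_inv := fun i => Fin.ext (by simp [ZMod.val_cast_of_lt (i.2.trans_le hk)]) }
  exact (Nat.card_congr e).trans (Nat.card_fin k)

section Signs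

variable {p f : ℕ}

lemma natDegree_muTuple_le (j : ZMod f) : (muTuple p f j).natDegree ≤ 1 := by
  unfold muTuple
  split_ifs <;> compute_degree

lemma coeff_one_muTuple (j : ZMod f) :
    (muTuple p f j).coeff 1 = if j = 0 then 1 else -1 := by
  unfold muTuple
  split_ifs <;> simp [coeff_one]

lemma coeff_one_muIter_s8 (k : ℕ) (j : ZMod f) :
    (muIter p f k j).coeff 1 = ∏ i ∈ range k, if j + i = 0 then 1 else -1 := by
  induction k with
  | zero => simp [muIter]
  | succ k ih =>
    rw [muIter, coeff_one_comp_of_natDegree_le_one (natDegree_muTuple_le _), ih,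
      coeff_one_muTuple, prod_range_succ, mul_comm]

lemma prod_sign_of_le {k : ℕ} (hk : k ≤ f) (j : ZMod f) :
    (∏ i ∈ range k, if j + i = 0 then (1 : ℤ) else -1) =
      (-1) ^ k * if (-j).val < k then -1 else 1 := by
  induction k with
  | zero => simp
  | succ k ih =>
    have hzero : j + k = 0 ↔ (-j).val = k := by
      have : NeZero f := ⟨by omega⟩
      rw [add_eq_zero_iff_eq_neg']
      constructor
      · rintro h
        rw [← h, ZMod.val_cast_of_lt (by omega)]
      · rintro h
        rw [← h, ZMod.natCast_zmod_val]
    rw [prod_range_succ, ih (by omega), pow_succ]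
    rcases lt_trichotomy (-j).val k with hlt | heq | hgt
    · simp [hzero, hlt, hlt.ne, hlt.trans k.lt_succ_self]
    · simp [hzero, heq]
    · simp [hzero, hgt.ne', hgt.not_gt, show ¬ (-j).val < k + 1 by omega]

lemma coeff_one_muIter_eq_one_or (k : ℕ) (j : ZMod f) :
    (muIter p f k j).coeff 1 = 1 ∨ (muIter p f k j).coeff 1 = -1 := by
  rw [← Int.isUnit_iff, coeff_one_muIter_s8, IsUnit.prod_iff]
  intro i _
  split_ifs <;> simp

lemma msign_eq_zero_iff (k : ℕ) (j : ZMod f) :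
    msign p f k j = 0 ↔ (muIter p f k j).coeff 1 = 1 := by
  unfold msign
  split_ifs with h <;> simp [h]

lemma coeff_one_muIter_add_cycle [NeZero f] (r : ℕ) (j : ZMod f) :
    (muIter p f (f + r) j).coeff 1 = -(-1) ^ f * (muIter p f r j).coeff 1 := by
  rw [coeff_one_muIter_s8, coeff_one_muIter_s8, prod_range_add, prod_sign_of_le le_rfl,
    if_pos (ZMod.val_lt _)]
  simp only [Nat.cast_add, ZMod.natCast_self, zero_add]
  ring

lemma msign_add_cycle (hf : Even f) [NeZero f] (r : ℕ) (j : ZMod f) :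
    msign p f (f + r) j = msign p f r j + 1 := by
  unfold msign
  rw [coeff_one_muIter_add_cycle, hf.neg_one_pow]
  rcases coeff_one_muIter_eq_one_or (p := p) r j with h | h
  · simp [h]
  · simp [h]; decide

lemma numZeros_of_le [NeZero f] {k : ℕ} (hk : k ≤ f) :
    numZeros p f k = if Odd k then k else f - k := by
  have hsign : ∀ j, msign p f k j = 0 ↔ ((-j).val < k ↔ Odd k) := by
    intro j
    rw [msign_eq_zero_iff, coeff_one_muIter_s8, prod_sign_of_le hk]
    rcases Nat.even_or_odd k with hk2 | hk2 <;> by_cases hlt : (-j).val < k <;>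
      simp [hk2, hk2.neg_one_pow, hlt, Nat.not_odd_iff_even]
  unfold numZeros
  simp_rw [hsign]
  split_ifs with hodd
  · simp only [hodd, iff_true]
    exact ZMod.natCard_neg_val_lt hk
  · simp only [hodd, iff_false]
    rw [ZMod.natCard_subtype_not, ZMod.natCard_neg_val_lt hk]

lemma numZeros_add_cycle (hf : Even f) [NeZero f] (r : ℕ) :
    numZeros p f (f + r) = f - numZeros p f r := by
  have hflip : ∀ x : ZMod 2, x + 1 = 0 ↔ ¬ x = 0 := by decide
  unfold numZeros
  simp_rw [msign_add_cycle hf, hflip]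
  exact ZMod.natCard_subtype_not _

end Signs

theorem numZeros_formula_general (p f : ℕ) (hf : 1 < f)
    (k : ℕ) (hk2 : k ≤ cycLen f) :
    (Odd f →
      (Odd k → numZeros p f k = k) ∧
      (Even k → numZeros p f k = cycLen f - k)) ∧
    (Even f →
      (Odd k →
        (k ≤ cycLen f / 2 → numZeros p f k = k) ∧
        (cycLen f / 2 < k → numZeros p f k = cycLen f - k)) ∧
      (Even k →
        (k ≤ cycLen f / 2 → numZeros p f k = cycLen f / 2 - k) ∧
        (cycLen f / 2 < k → numZeros p f k = k - cycLen f / 2))) := by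
  have : NeZero f := ⟨by omega⟩
  rcases Nat.even_or_odd f with hfe | hfo
  · have hl : cycLen f = 2 * f := if_neg (Nat.not_odd_iff_even.mpr hfe)
    rw [hl] at hk2 ⊢
    rw [Nat.mul_div_cancel_left f two_pos]
    refine ⟨fun hfo => absurd hfo (Nat.not_odd_iff_even.mpr hfe), fun _ => ?_⟩
    rcases le_or_gt k f with hkf | hkf
    · rw [numZeros_of_le hkf]
      simp only [Nat.odd_iff, Nat.even_iff] at *
      split_ifs <;> omega
    · obtain ⟨r, rfl⟩ : ∃ r, k = f + r := ⟨k - f, by omega⟩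
      rw [numZeros_add_cycle hfe, numZeros_of_le (by omega : r ≤ f)]
      simp only [Nat.odd_iff, Nat.even_iff] at hfe ⊢
      split_ifs <;> omega
  · have hl : cycLen f = f := if_pos hfo
    rw [hl] at hk2 ⊢
    refine ⟨fun _ => ⟨fun hodd => ?_, fun heven => ?_⟩,
      fun hfe => absurd hfe (Nat.not_even_iff_odd.mpr hfo)⟩
    · rw [numZeros_of_le hk2, if_pos hodd]
    · rw [numZeros_of_le hk2, if_neg (Nat.not_odd_iff_even.mpr heven)]

/-- The count of `0`'s in `m^{(k)}`, for `1 ≤ k ≤ l`. -/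
theorem numZeros_formula (p f : ℕ) (hp : p.Prime) (hp3 : 3 < p) (hf : 1 < f)
    (k : ℕ) (hk1 : 1 ≤ k) (hk2 : k ≤ cycLen f) :
    (Odd f →
      (Odd k → numZeros p f k = k) ∧
      (Even k → numZeros p f k = cycLen f - k)) ∧
    (Even f →
      (Odd k →
        (k ≤ cycLen f / 2 → numZeros p f k = k) ∧
        (cycLen f / 2 < k → numZeros p f k = cycLen f - k)) ∧
      (Even k →
        (k ≤ cycLen f / 2 → numZeros p f k = cycLen f / 2 - k) ∧
        (cycLen f / 2 < k → numZeros p f k = k - cycLen f / 2))) :=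
  numZeros_formula_general p f hf k hk2
end

section
/- For every integer k with 1 ≤ k ≤ f − 1: if k is odd, then m^{(k)} is a cyclic permutation (i.e., of the form g^i applied to it, for some i) of the f-tuple consisting of k entries equal to 0 followed by f − k entries equal to 1; if k is even, then m^{(k)} is a cyclic permutation of the f-tuple consisting of f − k entries equal to 0 followed by k entries equal to 1. -/
open Polynomial

/-- The coefficient of `X` in `(μ_i).comp q` is `±(coefficient of X in q)`,
with sign `+` exactly when `i = 0`. -/
lemma coeff1_comp (p f : ℕ) (i : ZMod f) (q : Polynomial ℤ) :
    ((muTuple p f i).comp q).coeff 1 = (if i = 0 then 1 else -1) * q.coeff 1 := by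
  unfold muTuple
  split_ifs <;> simp [sub_comp, coeff_sub, coeff_C, coeff_one]

/-- The leading coefficient of `μ^{(k)}_j` is the product of the leading
coefficients of `μ_j, μ_{j+1}, …, μ_{j+k-1}`. -/
lemma coeff1_muIter (p f : ℕ) (k : ℕ) (j : ZMod f) :
    (muIter p f k j).coeff 1 =
      ∏ t ∈ Finset.range k, (if (j + (t : ZMod f)) = 0 then 1 else (-1 : ℤ)) := by
  induction k with
  | zero => simp [muIter]
  | succ k ih =>
      rw [Finset.prod_range_succ, ← ih]
      simp [muIter, coeff1_comp, mul_comm]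

/-- Value of `-w + a` in `ZMod f` for natural numbers `w, a < f`. -/
lemma val_neg_add (f : ℕ) [NeZero f] (w a : ℕ) (hw : w < f) (ha : a < f) :
    (-(w : ZMod f) + (a : ZMod f)).val = if w ≤ a then a - w else a + f - w := by
  split_ifs with h
  · have e : -(w : ZMod f) + (a : ZMod f) = ((a - w : ℕ) : ZMod f) := by
      have h2 : ((a - w : ℕ) : ZMod f) + (w : ZMod f) = (a : ZMod f) := by
        rw [← Nat.cast_add]; congr 1; omega
      rw [← h2]; ring
    rw [e, ZMod.val_cast_of_lt (by omega)]
  · have e : -(w : ZMod f) + (a : ZMod f) = ((a + f - w : ℕ) : ZMod f) := by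
      have h2 : ((a + f - w : ℕ) : ZMod f) + (w : ZMod f) = (a : ZMod f) + (f : ZMod f) := by
        rw [← Nat.cast_add, ← Nat.cast_add]; congr 1; omega
      rw [ZMod.natCast_self, add_zero] at h2
      rw [← h2]; ring
    rw [e, ZMod.val_cast_of_lt (by omega)]

/-- For `k < f`, the window `{ -w, -w+1, …, -w+k-1 }` of `k` consecutive residues
contains `0` at most once, namely iff `w < k`; hence the sign product is
`(-1)^k` times `-1` exactly when `w < k`. -/
lemma prod_key (f : ℕ) [NeZero f] (k : ℕ) (hk : k < f) (w : ℕ) (hw : w < f) :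
    (∏ t ∈ Finset.range k, (if (-(w : ZMod f) + (t : ZMod f)) = 0 then 1 else (-1 : ℤ)))
      = (-1 : ℤ) ^ k * (if w < k then -1 else 1) := by
  have step : ∀ t ∈ Finset.range k,
      (if (-(w : ZMod f) + (t : ZMod f)) = 0 then (1 : ℤ) else -1)
        = -1 * (if t = w then -1 else 1) := by
    intro t ht
    have htk : t < k := Finset.mem_range.mp ht
    have hiff : (-(w : ZMod f) + (t : ZMod f) = 0) ↔ t = w := by
      constructor
      · intro h
        have h2 : (t : ZMod f) = (w : ZMod f) := by linear_combination h
        have := congrArg ZMod.val h2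
        rwa [ZMod.val_cast_of_lt (by omega), ZMod.val_cast_of_lt hw] at this
      · intro h; subst h; ring
    rw [if_congr hiff rfl rfl]
    split_ifs <;> ring
  rw [Finset.prod_congr rfl step, Finset.prod_mul_distrib, Finset.prod_const,
    Finset.prod_ite_eq' (Finset.range k) w (fun _ => (-1 : ℤ))]
  simp [Finset.mem_range, Finset.card_range]

/-- For `1 ≤ k ≤ f - 1`, `m^{(k)}` is a cyclic permutation of the tuple consisting of
`k` `0`'s followed by `f - k` `1`'s when `k` is odd, and of the tuple consisting of
`f - k` `0`'s followed by `k` `1`'s when `k` is even. -/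
theorem msign_is_cyclic_perm_of_block (p f : ℕ) (hp : p.Prime) (hp3 : 3 < p) (hf : 1 < f)
    (k : ℕ) (hk1 : 1 ≤ k) (hk2 : k ≤ f - 1) :
    (Odd k → ∃ i : ℕ, ∀ j : ZMod f,
      msign p f k j = if (j + (i : ZMod f)).val < k then 0 else 1) ∧
    (Even k → ∃ i : ℕ, ∀ j : ZMod f,
      msign p f k j = if (j + (i : ZMod f)).val < f - k then 0 else 1) := by
  haveI : NeZero f := ⟨by omega⟩
  have hkf : k < f := by omega
  constructor
  · intro hodd
    refine ⟨k - 1, fun j => ?_⟩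
    set w := (-j).val with hwdef
    have hw : w < f := ZMod.val_lt _
    have hj : j = -(w : ZMod f) := by
      rw [hwdef, ZMod.natCast_val, ZMod.cast_id]; ring
    have key : (muIter p f k j).coeff 1 = (-1 : ℤ) ^ k * (if w < k then -1 else 1) := by
      rw [coeff1_muIter, hj, prod_key f k hkf w hw]
    have hv : (j + ((k - 1 : ℕ) : ZMod f)).val < k ↔ w < k := by
      rw [hj, val_neg_add f w (k - 1) hw (by omega)]
      split_ifs with h <;> omega
    rw [msign, key, hodd.neg_one_pow]
    rcases lt_or_ge w k with h | h
    · rw [if_pos h, if_pos (hv.mpr h)]; norm_num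
    · rw [if_neg (by omega : ¬ w < k),
        if_neg (fun hc => absurd (hv.mp hc) (by omega))]
      norm_num
  · intro heven
    refine ⟨f - 1, fun j => ?_⟩
    set w := (-j).val with hwdef
    have hw : w < f := ZMod.val_lt _
    have hj : j = -(w : ZMod f) := by
      rw [hwdef, ZMod.natCast_val, ZMod.cast_id]; ring
    have key : (muIter p f k j).coeff 1 = (-1 : ℤ) ^ k * (if w < k then -1 else 1) := by
      rw [coeff1_muIter, hj, prod_key f k hkf w hw]
    have hv : (j + ((f - 1 : ℕ) : ZMod f)).val < f - k ↔ ¬ w < k := by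
      rw [hj, val_neg_add f w (f - 1) hw (by omega)]
      split_ifs with h <;> omega
    rw [msign, key, heven.neg_one_pow, one_mul]
    rcases lt_or_ge w k with h | h
    · rw [if_pos h, if_neg (fun hc => (hv.mp hc) h)]
      norm_num
    · rw [if_neg (by omega : ¬ w < k), if_pos (hv.mpr (by omega))]
      norm_num
end

section
/- Let r = (r_0, …, r_{f−1}) be an f-tuple of integers with 1 ≤ r_j ≤ p − 3 for all j. Then for every k with 0 ≤ k ≤ l, the integer tuple μ^{(k)}(r) := (μ^{(k)}_0(r_0), …, μ^{(k)}_{f−1}(r_{f−1})) satisfies 0 ≤ μ^{(k)}_j(r_j) ≤ p − 1 for all j, and μ^{(k)}(r) is neither the constant tuple (0, …, 0) nor the constant tuple (p − 1, …, p − 1). -/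
open Polynomial

lemma muIter_cases (p f : ℕ) (hf : 1 < f) : ∀ k : ℕ, ∀ j : ZMod f,
    (j + (k : ZMod f) = 1 ∧ (muIter p f k j = X ∨ muIter p f k j = X - 1 ∨
      muIter p f k j = C ((p:ℤ)-2) - X ∨ muIter p f k j = C ((p:ℤ)-3) - X)) ∨
    (j + (k : ZMod f) ≠ 1 ∧ (muIter p f k j = X ∨ muIter p f k j = X + 1 ∨
      muIter p f k j = C ((p:ℤ)-1) - X ∨ muIter p f k j = C ((p:ℤ)-2) - X)) := by
  haveI : Fact (1 < f) := ⟨hf⟩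
  intro k
  induction k with
  | zero =>
    intro j
    by_cases h : j + ((0:ℕ) : ZMod f) = 1
    · exact Or.inl ⟨h, Or.inl rfl⟩
    · exact Or.inr ⟨h, Or.inl rfl⟩
  | succ k ih =>
    intro j
    have hcast : ((k+1 : ℕ) : ZMod f) = (k : ZMod f) + 1 := by push_cast; ring
    have hrec : muIter p f (k+1) j = (muTuple p f (j + (k : ZMod f))).comp (muIter p f k j) := rfl
    rcases eq_or_ne (j + (k : ZMod f)) 0 with h0 | h0
    · -- μ_0 = X - 1 applied; previous state in A-set, new index ≡ 1
      have h1 : j + ((k+1 : ℕ) : ZMod f) = 1 := by rw [hcast, ← add_assoc, h0, zero_add]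
      have hne : j + (k : ZMod f) ≠ 1 := by rw [h0]; exact zero_ne_one
      rcases ih j with ⟨h, _⟩ | ⟨_, hq⟩
      · exact absurd h hne
      have hmu : muTuple p f (j + (k : ZMod f)) = X - 1 := by rw [h0]; simp [muTuple]
      rw [hmu] at hrec
      simp only [sub_comp, X_comp, one_comp] at hrec
      refine Or.inl ⟨h1, ?_⟩
      rcases hq with h | h | h | h <;> rw [h] at hrec
      · exact Or.inr (Or.inl hrec)
      · refine Or.inl ?_; rw [hrec]; ring
      · refine Or.inr (Or.inr (Or.inl ?_)); rw [hrec]; simp only [C_sub, C_1, map_ofNat]; ring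
      · refine Or.inr (Or.inr (Or.inr ?_)); rw [hrec]; simp only [C_sub, C_1, map_ofNat]; ring
    rcases eq_or_ne (j + (k : ZMod f)) 1 with h1 | h1
    · -- μ_1 = C(p-2) - X; previous state in B-set, new index ≡ 2 ≠ 1
      have h2 : j + ((k+1 : ℕ) : ZMod f) ≠ 1 := by
        rw [hcast, ← add_assoc, h1]
        intro h
        exact one_ne_zero (add_left_cancel (a := (1 : ZMod f))
          (show (1:ZMod f) + 1 = 1 + 0 by rw [add_zero]; exact h))
      rcases ih j with ⟨_, hq⟩ | ⟨h, _⟩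
      swap
      · exact absurd h1 h
      have hmu : muTuple p f (j + (k : ZMod f)) = C ((p:ℤ)-2) - X := by
        rw [h1]; simp [muTuple, one_ne_zero]
      rw [hmu] at hrec
      simp only [sub_comp, X_comp, C_comp] at hrec
      refine Or.inr ⟨h2, ?_⟩
      rcases hq with h | h | h | h <;> rw [h] at hrec
      · exact Or.inr (Or.inr (Or.inr hrec))
      · refine Or.inr (Or.inr (Or.inl ?_)); rw [hrec]; simp only [C_sub, C_1, map_ofNat]; ring
      · refine Or.inl ?_; rw [hrec]; simp only [C_sub, C_1, map_ofNat]; ring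
      · refine Or.inr (Or.inl ?_); rw [hrec]; simp only [C_sub, C_1, map_ofNat]; ring
    · -- generic μ = C(p-1) - X; previous in A, new index ≠ 1
      have h2 : j + ((k+1 : ℕ) : ZMod f) ≠ 1 := by
        rw [hcast, ← add_assoc]
        intro h
        exact h0 (add_right_cancel (b := (1 : ZMod f))
          (show j + (k:ZMod f) + 1 = 0 + 1 by rw [zero_add]; exact h))
      rcases ih j with ⟨h, _⟩ | ⟨_, hq⟩
      · exact absurd h h1
      have hmu : muTuple p f (j + (k : ZMod f)) = C ((p:ℤ)-1) - X := by
        simp [muTuple, h0, h1]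
      rw [hmu] at hrec
      simp only [sub_comp, X_comp, C_comp] at hrec
      refine Or.inr ⟨h2, ?_⟩
      rcases hq with h | h | h | h <;> rw [h] at hrec
      · exact Or.inr (Or.inr (Or.inl hrec))
      · refine Or.inr (Or.inr (Or.inr ?_)); rw [hrec]; simp only [C_sub, C_1, map_ofNat]; ring
      · refine Or.inl ?_; rw [hrec]; simp only [C_sub, C_1, map_ofNat]; ring
      · refine Or.inr (Or.inl ?_); rw [hrec]; simp only [C_sub, C_1, map_ofNat]; ring

/-- If `1 ≤ r_j ≤ p - 3` for all `j`, then each `μ^{(k)}(r)` has entries in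
`[0, p - 1]` and is neither `(0, …, 0)` nor `(p-1, …, p-1)` (genericity). -/
theorem muIter_eval_generic (p f : ℕ) (hp : p.Prime) (hp3 : 3 < p) (hf : 1 < f)
    (r : ZMod f → ℤ) (hr : ∀ j, 1 ≤ r j ∧ r j ≤ (p : ℤ) - 3)
    (k : ℕ) (hk : k ≤ cycLen f) :
    (∀ j : ZMod f, 0 ≤ (muIter p f k j).eval (r j) ∧
        (muIter p f k j).eval (r j) ≤ (p : ℤ) - 1) ∧
    ¬ (∀ j : ZMod f, (muIter p f k j).eval (r j) = 0) ∧
    ¬ (∀ j : ZMod f, (muIter p f k j).eval (r j) = (p : ℤ) - 1) := by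
  haveI : Fact (1 < f) := ⟨hf⟩
  have hp2 : (4:ℤ) ≤ (p:ℤ) := by exact_mod_cast hp3
  have key : ∀ j : ZMod f, 0 ≤ (muIter p f k j).eval (r j) ∧
      (muIter p f k j).eval (r j) ≤ (p:ℤ) - 2 := by
    intro j
    obtain ⟨hr1, hr2⟩ := hr j
    rcases muIter_cases p f hf k j with ⟨_, h | h | h | h⟩ | ⟨_, h | h | h | h⟩ <;>
      rw [h] <;> simp <;> constructor <;> linarith
  refine ⟨fun j => ⟨(key j).1, by linarith [(key j).2]⟩, ?_, ?_⟩
  · intro hall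
    set j : ZMod f := -(k : ZMod f) with hj
    have h0 : j + (k : ZMod f) = 0 := by rw [hj]; ring
    have h1 : j + (k : ZMod f) ≠ 1 := by rw [h0]; exact zero_ne_one
    obtain ⟨hr1, hr2⟩ := hr j
    rcases muIter_cases p f hf k j with ⟨h, _⟩ | ⟨_, h | h | h | h⟩
    · exact h1 h
    all_goals have := hall j; rw [h] at this; simp at this; linarith
  · intro hall
    have := hall 0
    have := (key 0).2
    linarith
end

section
/- For λ ∈ (ℤ ± x)^f and r ∈ ℤ^f define the integer E(λ, r) := Σ_{j=0}^{f−1} p^j (r_j − λ_j(r_j)) if λ_{f−1}(x) equals x or x − 1, and E(λ, r) := p^f − 1 + Σ_{j=0}^{f−1} p^j (r_j − λ_j(r_j)) otherwise (so that E(λ, r) = 2·e(λ)(r) in the notation of Breuil–Paškūnas). Define S(r) := Σ_{j=0}^{l−1} E(g^{j+1}μ, (gμ^{(j)})(r)). Then S(r) does not depend on r, i.e., S(r) = S(r') for all r, r' ∈ ℤ^f, and S(r) is divisible by 2(p^f − 1). (Equivalently: the exponent e'_l(r) = S(r)/2 is an integer independent of r and congruent to 0 modulo p^f − 1, so that σ'_l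 = σ'_0.) -/
open Polynomial

open scoped Classical in
/-- `E(λ, r) = 2 e(λ)(r)`: it is `Σ_j p^j (r_j - λ_j(r_j))` if `λ_{f-1} ∈ {x, x-1}`,
and `p^f - 1 + Σ_j p^j (r_j - λ_j(r_j))` otherwise. -/
noncomputable def Efun (p f : ℕ) (lam : ZMod f → Polynomial ℤ) (r : ZMod f → ℤ) : ℤ :=
  (if lam ((f - 1 : ℕ) : ZMod f) = X ∨ lam ((f - 1 : ℕ) : ZMod f) = X - 1 then 0
   else (p : ℤ) ^ f - 1) +
  ∑ j ∈ Finset.range f,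
    (p : ℤ) ^ j * (r (j : ZMod f) - (lam (j : ZMod f)).eval (r (j : ZMod f)))

/-- `S(r) = Σ_{j=0}^{l-1} E(g^{j+1}μ, (gμ^{(j)})(r))`, i.e. `2 e'_l(r)`. -/
noncomputable def Sfun (p f : ℕ) (r : ZMod f → ℤ) : ℤ :=
  ∑ j ∈ Finset.range (cycLen f),
    Efun p f (fun i => muTuple p f (i + (j : ZMod f) + 1))
      (fun i => (muIter p f j (i + 1)).eval (r i))

section Aux

variable (p f : ℕ)

noncomputable def nuP : Polynomial ℤ := C ((p:ℤ) - 1) - X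

lemma nu_comp_nu : (nuP p).comp (nuP p) = X := by
  simp [nuP, sub_comp, C_comp, X_comp]

lemma muIter_zero (j : ZMod f) : muIter p f 0 j = X := rfl
lemma muIter_succ (k : ℕ) (j : ZMod f) :
    muIter p f (k+1) j = (muTuple p f (j + (k : ZMod f))).comp (muIter p f k j) := rfl

lemma muIter_add (a b : ℕ) (j : ZMod f) :
    muIter p f (a + b) j = (muIter p f b (j + (a : ZMod f))).comp (muIter p f a j) := by
  induction b with
  | zero => simp [muIter_zero]
  | succ b ih =>
      rw [show a + (b+1) = (a+b)+1 from rfl, muIter_succ, ih, muIter_succ,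
        Polynomial.comp_assoc]
      congr 2
      push_cast
      ring

lemma cast_ne_cast (hf : 0 < f) {a b : ℕ} (ha : a < f) (hb : b < f) (hab : a ≠ b) :
    (a : ZMod f) ≠ (b : ZMod f) := by
  haveI : NeZero f := ⟨hf.ne'⟩
  intro h
  exact hab (by simpa [ZMod.val_cast_of_lt ha, ZMod.val_cast_of_lt hb] using congrArg ZMod.val h)

lemma muIter_chain (k : ℕ) (j : ZMod f)
    (h : ∀ m : ℕ, m < k → (j + (m:ZMod f) ≠ 0 ∧ j + (m:ZMod f) ≠ 1)) :
    muIter p f k j = if Even k then X else nuP p := by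
  induction k with
  | zero => simp [muIter_zero]
  | succ k ih =>
    have hk := h k (lt_add_one k)
    have hmu : muTuple p f (j + (k:ZMod f)) = nuP p := by
      simp [muTuple, hk.1, hk.2, nuP]
    rw [muIter_succ, hmu, ih (fun m hm => h m (hm.trans (lt_add_one k)))]
    rcases Nat.even_or_odd k with he | ho
    · rw [if_pos he, if_neg (show ¬ Even (k+1) from fun h' => (Nat.even_add_one.mp h') he),
        comp_X]
    · rw [if_neg (Nat.not_even_iff_odd.mpr ho),
        if_pos (Nat.even_add_one.mpr (Nat.not_even_iff_odd.mpr ho)), nu_comp_nu]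

lemma chain_block (hf : 1 < f) (n k : ℕ) (hn2 : 2 ≤ n) (hk : n + k ≤ f) :
    muIter p f k ((n : ℕ) : ZMod f) = if Even k then X else nuP p := by
  apply muIter_chain
  intro m hm
  have h1 : ((n:ℕ):ZMod f) + ((m:ℕ):ZMod f) = ((n+m : ℕ) : ZMod f) := by push_cast; ring
  refine ⟨?_, ?_⟩
  · rw [h1, show (0:ZMod f) = ((0:ℕ):ZMod f) by simp]
    exact cast_ne_cast f (by omega) (by omega) (by omega) (by omega)
  · rw [h1, show (1:ZMod f) = ((1:ℕ):ZMod f) by simp]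
    exact cast_ne_cast f (by omega) (by omega) (by omega) (by omega)

lemma muTuple_zero : muTuple p f 0 = X - 1 := by simp [muTuple]

lemma muTuple_one (hf : 1 < f) : muTuple p f 1 = C ((p:ℤ) - 2) - X := by
  haveI : Fact (1 < f) := ⟨hf⟩
  simp [muTuple, one_ne_zero]

lemma muIter_two_zero (hf : 1 < f) : muIter p f 2 (0 : ZMod f) = nuP p := by
  rw [show (2:ℕ) = 1+1 from rfl, muIter_succ, muIter_succ, muIter_zero]
  simp only [Nat.cast_one, Nat.cast_zero, add_zero, zero_add, comp_X]
  rw [muTuple_zero, muTuple_one p f hf, nuP]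
  simp only [sub_comp, C_comp, X_comp, one_comp]
  simp only [map_sub, map_one, map_ofNat]
  ring

lemma muIter_full (hf : 1 < f) (j : ZMod f) :
    muIter p f f j = if Even f then C ((p:ℤ) - (if j = 1 then 3 else 1)) - X else X := by
  haveI : NeZero f := ⟨by omega⟩
  haveI : Fact (1 < f) := ⟨hf⟩
  obtain ⟨n, hn, rfl⟩ : ∃ n : ℕ, n < f ∧ ((n:ℕ) : ZMod f) = j :=
    ⟨j.val, ZMod.val_lt j, (ZMod.natCast_val j).trans (ZMod.cast_id _ _)⟩
  rcases Nat.lt_or_ge n 2 with h2 | h2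
  · interval_cases n
    · -- n = 0
      have hd : muIter p f (2 + (f-2)) ((0:ℕ):ZMod f)
          = (muIter p f (f-2) (((0:ℕ):ZMod f) + ((2:ℕ):ZMod f))).comp
              (muIter p f 2 ((0:ℕ):ZMod f)) := muIter_add p f 2 (f-2) _
      rw [show 2 + (f-2) = f by omega] at hd
      rw [hd, Nat.cast_zero, zero_add, chain_block p f hf 2 (f-2) le_rfl (by omega),
        muIter_two_zero p f hf]
      have hj1 : ((0:ℕ) : ZMod f) ≠ 1 := by rw [Nat.cast_zero]; exact zero_ne_one
      rcases Nat.even_or_odd f with he | ho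
      · have hm := Nat.even_iff.mp he
        rw [if_pos he, if_pos (Nat.even_iff.mpr (by omega)),
          if_neg (show (0:ZMod f) ≠ 1 from zero_ne_one), X_comp, nuP]
      · have hm := Nat.odd_iff.mp ho
        rw [if_neg (Nat.not_even_iff_odd.mpr ho),
          if_neg (show ¬ Even (f-2) by rw [Nat.even_iff]; omega), nu_comp_nu]
    · -- n = 1
      have hd : muIter p f (1 + (f-1)) ((1:ℕ):ZMod f)
          = (muIter p f (f-1) (((1:ℕ):ZMod f) + ((1:ℕ):ZMod f))).comp
              (muIter p f 1 ((1:ℕ):ZMod f)) := muIter_add p f 1 (f-1) _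
      rw [show 1 + (f-1) = f by omega] at hd
      have hd2 : muIter p f ((f-2) + 1) ((2:ℕ):ZMod f)
          = (muIter p f 1 (((2:ℕ):ZMod f) + ((f-2:ℕ):ZMod f))).comp
              (muIter p f (f-2) ((2:ℕ):ZMod f)) := muIter_add p f (f-2) 1 _
      rw [show (f-2) + 1 = f - 1 by omega] at hd2
      have hcast2 : ((1:ℕ):ZMod f) + ((1:ℕ):ZMod f) = ((2:ℕ):ZMod f) := by push_cast; ring
      have hcast0 : ((2:ℕ):ZMod f) + ((f-2:ℕ):ZMod f) = 0 := by
        rw [show ((2:ℕ):ZMod f) + ((f-2:ℕ):ZMod f) = ((2 + (f-2) : ℕ):ZMod f) by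
          push_cast; ring, show 2 + (f-2) = f by omega, ZMod.natCast_self]
      have h1 : muIter p f 1 ((1:ℕ):ZMod f) = muTuple p f 1 := by
        rw [show (1:ℕ) = 0+1 from rfl, muIter_succ, muIter_zero, comp_X, Nat.cast_zero,
          add_zero, Nat.cast_one]
      have h0 : muIter p f 1 (0:ZMod f) = muTuple p f 0 := by
        rw [show (1:ℕ) = 0+1 from rfl, muIter_succ, muIter_zero, comp_X, Nat.cast_zero,
          add_zero]
      rw [hd, hcast2, hd2, hcast0, h0, h1,
        chain_block p f hf 2 (f-2) le_rfl (by omega), muTuple_zero, muTuple_one p f hf]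
      have hj1 : ((1:ℕ):ZMod f) = 1 := Nat.cast_one
      rcases Nat.even_or_odd f with he | ho
      · have hm := Nat.even_iff.mp he
        rw [if_pos he, if_pos (Nat.even_iff.mpr (by omega)), if_pos hj1]
        simp only [comp_X, sub_comp, C_comp, X_comp, one_comp, map_sub, map_one, map_ofNat]
        ring
      · have hm := Nat.odd_iff.mp ho
        rw [if_neg (Nat.not_even_iff_odd.mpr ho),
          if_neg (show ¬ Even (f-2) by rw [Nat.even_iff]; omega)]
        simp only [nuP, sub_comp, C_comp, X_comp, one_comp, map_sub, map_one, map_ofNat]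
        ring
  · -- n ≥ 2
    have hd : muIter p f ((f-n) + n) ((n:ℕ):ZMod f)
        = (muIter p f n (((n:ℕ):ZMod f) + ((f-n:ℕ):ZMod f))).comp
            (muIter p f (f-n) ((n:ℕ):ZMod f)) := muIter_add p f (f-n) n _
    rw [show (f-n) + n = f by omega] at hd
    have hcast0 : ((n:ℕ):ZMod f) + ((f-n:ℕ):ZMod f) = 0 := by
      rw [show ((n:ℕ):ZMod f) + ((f-n:ℕ):ZMod f) = ((n + (f-n) : ℕ):ZMod f) by
        push_cast; ring, show n + (f-n) = f by omega, ZMod.natCast_self]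
    rw [hcast0] at hd
    have hd2 : muIter p f (2 + (n-2)) (0:ZMod f)
        = (muIter p f (n-2) ((0:ZMod f) + ((2:ℕ):ZMod f))).comp
            (muIter p f 2 (0:ZMod f)) := muIter_add p f 2 (n-2) _
    rw [show 2 + (n-2) = n by omega] at hd2
    rw [hd, hd2, zero_add, muIter_two_zero p f hf,
      chain_block p f hf 2 (n-2) le_rfl (by omega),
      chain_block p f hf n (f-n) h2 (by omega)]
    have hj1 : ((n:ℕ):ZMod f) ≠ 1 := by
      rw [show (1:ZMod f) = ((1:ℕ):ZMod f) by simp]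
      exact cast_ne_cast f (by omega) hn (by omega) (by omega)
    rcases Nat.even_or_odd f with he | ho <;> rcases Nat.even_or_odd n with hen | hon
    · have hm := Nat.even_iff.mp he; have hm' := Nat.even_iff.mp hen
      rw [if_pos he, if_neg hj1, if_pos (Nat.even_iff.mpr (by omega : (n-2) % 2 = 0)),
        if_pos (Nat.even_iff.mpr (by omega : (f-n) % 2 = 0)), X_comp, comp_X, nuP]
    · have hm := Nat.even_iff.mp he; have hm' := Nat.odd_iff.mp hon
      rw [if_pos he, if_neg hj1,
        if_neg (show ¬ Even (n-2) by rw [Nat.even_iff]; omega),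
        if_neg (show ¬ Even (f-n) by rw [Nat.even_iff]; omega),
        nu_comp_nu, X_comp, nuP]
    · have hm := Nat.odd_iff.mp ho; have hm' := Nat.even_iff.mp hen
      rw [if_neg (Nat.not_even_iff_odd.mpr ho),
        if_pos (Nat.even_iff.mpr (by omega : (n-2) % 2 = 0)),
        if_neg (show ¬ Even (f-n) by rw [Nat.even_iff]; omega),
        X_comp, nu_comp_nu]
    · have hm := Nat.odd_iff.mp ho; have hm' := Nat.odd_iff.mp hon
      rw [if_neg (Nat.not_even_iff_odd.mpr ho),
        if_neg (show ¬ Even (n-2) by rw [Nat.even_iff]; omega),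
        if_pos (Nat.even_iff.mpr (by omega : (f-n) % 2 = 0)),
        nu_comp_nu, X_comp]

lemma muIter_cyc (hf : 1 < f) (j : ZMod f) : muIter p f (cycLen f) j = X := by
  haveI : NeZero f := ⟨by omega⟩
  rcases Nat.even_or_odd f with he | ho
  · rw [cycLen, if_neg (Nat.not_odd_iff_even.mpr he), two_mul, muIter_add p f f f j,
      ZMod.natCast_self, add_zero, muIter_full p f hf j, if_pos he]
    by_cases hj : j = 1 <;> simp [hj, sub_comp, C_comp, X_comp]
  · rw [cycLen, if_pos ho, muIter_full p f hf j, if_neg (Nat.not_even_iff_odd.mpr ho)]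

end Aux

section Aux2

variable (p f : ℕ)

lemma CsubX_ne (c : ℤ) : ¬ (C c - X = X ∨ C c - X = X - 1) := by
  rintro (h | h) <;>
  · have h1 := congrArg (fun q : Polynomial ℤ => q.coeff 1) h
    simp only [coeff_sub, coeff_C, coeff_X_one, coeff_one] at h1
    norm_num at h1

lemma Sfun_eq_const (hf : 1 < f) (r : ZMod f → ℤ) :
    Sfun p f r = ∑ j ∈ Finset.range (cycLen f),
      (if f ∣ j then 0 else (p:ℤ)^f - 1) := by
  haveI : NeZero f := ⟨by omega⟩
  have hA : ∀ (j i : ℕ),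
      (muTuple p f ((i:ZMod f) + (j:ZMod f) + 1)).eval
          ((muIter p f j ((i:ZMod f)+1)).eval (r (i:ZMod f)))
        = (muIter p f (j+1) ((i:ZMod f)+1)).eval (r (i:ZMod f)) := by
    intro j i
    rw [muIter_succ, eval_comp]
    congr 2
    ring
  have hidx : ∀ j : ℕ, (((f-1:ℕ)) : ZMod f) + (j:ZMod f) + 1 = (j:ZMod f) := by
    intro j
    have h0 : ((f-1:ℕ):ZMod f) + 1 = 0 := by
      calc ((f-1:ℕ):ZMod f) + 1 = (((f-1)+1 : ℕ) : ZMod f) := by push_cast; ring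
        _ = 0 := by rw [Nat.sub_add_cancel (by omega), ZMod.natCast_self]
    calc (((f-1:ℕ)) : ZMod f) + (j:ZMod f) + 1
        = (j:ZMod f) + (((f-1:ℕ):ZMod f) + 1) := by ring
      _ = (j:ZMod f) := by rw [h0, add_zero]
  have expand : Sfun p f r = ∑ j ∈ Finset.range (cycLen f),
      ((if f ∣ j then 0 else (p:ℤ)^f - 1)
        + ∑ i ∈ Finset.range f, (p:ℤ)^i *
            ((muIter p f j ((i:ZMod f)+1)).eval (r (i:ZMod f))
              - (muIter p f (j+1) ((i:ZMod f)+1)).eval (r (i:ZMod f)))) := by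
    unfold Sfun Efun
    apply Finset.sum_congr rfl
    intro j _
    beta_reduce
    congr 1
    · rw [hidx j]
      by_cases hd : f ∣ j
      · have hz : (j:ZMod f) = 0 := (ZMod.natCast_eq_zero_iff j f).mpr hd
        rw [hz, muTuple_zero, if_pos (Or.inr rfl), if_pos hd]
      · have hne : (j:ZMod f) ≠ 0 := fun h => hd ((ZMod.natCast_eq_zero_iff j f).mp h)
        obtain ⟨c, hc⟩ : ∃ c, muTuple p f (j:ZMod f) = C c - X := by
          unfold muTuple
          rw [if_neg hne]
          by_cases h1 : (j:ZMod f) = 1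
          · rw [if_pos h1]; exact ⟨_, rfl⟩
          · rw [if_neg h1]; exact ⟨_, rfl⟩
        rw [hc, if_neg (CsubX_ne c), if_neg hd]
    · apply Finset.sum_congr rfl
      intro i _
      rw [hA j i]
  rw [expand, Finset.sum_add_distrib]
  have h2 : (∑ j ∈ Finset.range (cycLen f), ∑ i ∈ Finset.range f,
      (p:ℤ)^i * ((muIter p f j ((i:ZMod f)+1)).eval (r (i:ZMod f))
        - (muIter p f (j+1) ((i:ZMod f)+1)).eval (r (i:ZMod f)))) = 0 := by
    rw [Finset.sum_comm]
    apply Finset.sum_eq_zero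
    intro i _
    rw [← Finset.mul_sum,
      Finset.sum_range_sub' (fun j => (muIter p f j ((i:ZMod f)+1)).eval (r (i:ZMod f)))]
    rw [muIter_zero, muIter_cyc p f hf, eval_X, sub_self, mul_zero]
  rw [h2, add_zero]

lemma sum_if_odd (hf : 1 < f) (ho : Odd f) (D : ℤ) :
    ∑ j ∈ Finset.range (cycLen f), (if f ∣ j then 0 else D) = ((f:ℤ) - 1) * D := by
  rw [cycLen, if_pos ho]
  have key : ∀ j ∈ Finset.range f, (if f ∣ j then (0:ℤ) else D)
      = D - (if j = 0 then D else 0) := by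
    intro j hj
    rw [Finset.mem_range] at hj
    by_cases hd : f ∣ j
    · have hj0 : j = 0 := Nat.eq_zero_of_dvd_of_lt hd hj
      rw [if_pos hd, hj0, if_pos rfl, sub_self]
    · have hj0 : j ≠ 0 := by rintro rfl; exact hd (dvd_zero f)
      rw [if_neg hd, if_neg hj0, sub_zero]
  rw [Finset.sum_congr rfl key, Finset.sum_sub_distrib, Finset.sum_const,
    Finset.card_range, Finset.sum_ite_eq' (Finset.range f) 0 (fun _ => D),
    if_pos (Finset.mem_range.mpr (by omega))]
  push_cast
  ring

lemma sum_if_even (hf : 1 < f) (he : Even f) (D : ℤ) :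
    ∑ j ∈ Finset.range (cycLen f), (if f ∣ j then 0 else D) = (2*(f:ℤ) - 2) * D := by
  rw [cycLen, if_neg (Nat.not_odd_iff_even.mpr he)]
  have key : ∀ j ∈ Finset.range (2*f), (if f ∣ j then (0:ℤ) else D)
      = D - (if j = 0 then D else 0) - (if j = f then D else 0) := by
    intro j hj
    rw [Finset.mem_range] at hj
    by_cases hd : f ∣ j
    · obtain ⟨k, rfl⟩ := hd
      have hk : k < 2 := by
        by_contra h
        push_neg at h
        have := Nat.mul_le_mul_left f h
        omega
      interval_cases k
      · rw [if_pos (Dvd.intro 0 rfl), mul_zero, if_pos rfl,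
          if_neg (by omega : (0:ℕ) ≠ f)]
        ring
      · rw [if_pos (Dvd.intro 1 rfl), mul_one, if_neg (by omega : f ≠ 0), if_pos rfl]
        ring
    · have hj0 : j ≠ 0 := by rintro rfl; exact hd (dvd_zero f)
      have hjf : j ≠ f := by rintro rfl; exact hd dvd_rfl
      rw [if_neg hd, if_neg hj0, if_neg hjf, sub_zero, sub_zero]
  rw [Finset.sum_congr rfl key, Finset.sum_sub_distrib, Finset.sum_sub_distrib,
    Finset.sum_const, Finset.card_range,
    Finset.sum_ite_eq' (Finset.range (2*f)) 0 (fun _ => D),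
    Finset.sum_ite_eq' (Finset.range (2*f)) f (fun _ => D),
    if_pos (Finset.mem_range.mpr (by omega)), if_pos (Finset.mem_range.mpr (by omega))]
  push_cast
  ring

end Aux2

/-- `S(r)` is independent of `r` and divisible by `2(p^f - 1)`; equivalently the
exponent `e'_l(r) = S(r)/2` is an integer independent of `r` and `≡ 0 mod p^f - 1`,
so that `σ'_l = σ'_0`. -/
theorem Sfun_const_and_dvd (p f : ℕ) (hp : p.Prime) (hp3 : 3 < p) (hf : 1 < f) :
    (∀ r r' : ZMod f → ℤ, Sfun p f r = Sfun p f r') ∧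
    (∀ r : ZMod f → ℤ, 2 * ((p : ℤ) ^ f - 1) ∣ Sfun p f r) := by
  constructor
  · intro r r'
    rw [Sfun_eq_const p f hf r, Sfun_eq_const p f hf r']
  · intro r
    rw [Sfun_eq_const p f hf r]
    rcases Nat.even_or_odd f with he | ho
    · rw [sum_if_even f hf he ((p:ℤ)^f - 1)]
      exact ⟨(f:ℤ) - 1, by ring⟩
    · rw [sum_if_odd f hf ho ((p:ℤ)^f - 1)]
      obtain ⟨t, ht⟩ := ho
      have hft : (f:ℤ) - 1 = 2*t := by
        have := congrArg (Nat.cast : ℕ → ℤ) ht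
        push_cast at this
        omega
      rw [hft]
      exact ⟨t, by ring⟩
end
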